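/- For each k ∈ ℕ define the polynomials p_k(z) = ∑_{j=0}^{k} (−1)^j · (k/(k+j)) · C(k+j, 2j) · z^j and q_k(z) = ∑_{j=0}^{k−1} (−1)^j · C(k+j, 2j+1) · z^j (binomial coefficients C(·,·)). Then p_k(z) = T_k(1 − z/2) and q_k(z) = U_{k−1}(1 − z/2), where T_k and U_{k−1} are the Chebyshev polynomials of the first and second kind. Consequently, for the one-dimensional quadratic f(x) = (λ/2)x² with λ > 0, the K-step leapfrog iterates with step size η (v_{k+1/2} = v_k − (η/2)f'(x_k), x_{k+1} = x_k + η v_{k+1/2}, v_{k+1} = v_{k+1/2} − (η/2)f'(x_{k+1})) satisfy x_k = p_k(η²λ)·x₀ + η·q_k(η²λ)·v₀ for every 0 ≤ k ≤ K. -/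

import Mathlib

noncomputable section

/-- The polynomial `p_k(z) = ∑_{j=0}^{k} (−1)^j (k/(k+j)) C(k+j, 2j) z^j`. -/
def pCoef (k : ℕ) (z : ℝ) : ℝ :=
  ∑ j ∈ Finset.range (k + 1),
    (-1 : ℝ) ^ j * ((k : ℝ) / ((k : ℝ) + j)) * (Nat.choose (k + j) (2 * j)) * z ^ j

/-- The polynomial `q_k(z) = ∑_{j=0}^{k−1} (−1)^j C(k+j, 2j+1) z^j`. -/
def qCoef (k : ℕ) (z : ℝ) : ℝ :=
  ∑ j ∈ Finset.range k, (-1 : ℝ) ^ j * (Nat.choose (k + j) (2 * j + 1)) * z ^ j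

/-- One leapfrog step on `ℝ × ℝ` for gradient field `gradf` and step size `η`. -/
def leapfrogStep1 (gradf : ℝ → ℝ) (η : ℝ) (p : ℝ × ℝ) : ℝ × ℝ :=
  let v' := p.2 - (η / 2) * gradf p.1
  let x' := p.1 + η * v'
  (x', v' - (η / 2) * gradf x')

/-- Auxiliary polynomial `P_k(z) = ∑_{j=0}^{k} (−1)^j C(k+j,2j) z^j`. -/
def Pfun (k : ℕ) (z : ℝ) : ℝ :=
  ∑ j ∈ Finset.range (k + 1), (-1 : ℝ) ^ j * (Nat.choose (k + j) (2 * j)) * z ^ j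

lemma qCoef_succ (k : ℕ) (z : ℝ) : qCoef (k + 1) z = Pfun k z + qCoef k z := by
  unfold qCoef Pfun
  have h : ∑ j ∈ Finset.range (k + 1),
      (-1 : ℝ) ^ j * (Nat.choose (k + 1 + j) (2 * j + 1)) * z ^ j
      = ∑ j ∈ Finset.range (k + 1),
        ((-1 : ℝ) ^ j * (Nat.choose (k + j) (2 * j)) * z ^ j
          + (-1 : ℝ) ^ j * (Nat.choose (k + j) (2 * j + 1)) * z ^ j) := by
    refine Finset.sum_congr rfl fun j _ => ?_
    have h1 : k + 1 + j = (k + j) + 1 := by omega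
    rw [h1, Nat.choose_succ_succ]
    push_cast
    ring
  rw [h, Finset.sum_add_distrib, Finset.sum_range_succ
    (fun j => (-1 : ℝ) ^ j * (Nat.choose (k + j) (2 * j + 1)) * z ^ j)]
  have h0 : (Nat.choose (k + k) (2 * k + 1) : ℝ) = 0 := by
    rw [Nat.choose_eq_zero_of_lt (by omega)]; norm_num
  rw [h0]
  ring

lemma Pfun_succ (k : ℕ) (z : ℝ) : Pfun (k + 1) z = Pfun k z - z * qCoef (k + 1) z := by
  unfold Pfun qCoef
  have h2 : ∑ j ∈ Finset.range (k + 1 + 1),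
      (-1 : ℝ) ^ j * (Nat.choose (k + j) (2 * j)) * z ^ j
      = ∑ j ∈ Finset.range (k + 1), (-1 : ℝ) ^ j * (Nat.choose (k + j) (2 * j)) * z ^ j := by
    rw [Finset.sum_range_succ]
    have h0 : (Nat.choose (k + (k + 1)) (2 * (k + 1)) : ℝ) = 0 := by
      rw [Nat.choose_eq_zero_of_lt (by omega)]; norm_num
    rw [h0]; ring
  rw [← h2,
    Finset.sum_range_succ' (fun j => (-1 : ℝ) ^ j * (Nat.choose (k + 1 + j) (2 * j)) * z ^ j) (k + 1),
    Finset.sum_range_succ' (fun j => (-1 : ℝ) ^ j * (Nat.choose (k + j) (2 * j)) * z ^ j) (k + 1)]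
  have key : ∑ j ∈ Finset.range (k + 1),
      (-1 : ℝ) ^ (j + 1) * (Nat.choose (k + 1 + (j + 1)) (2 * (j + 1))) * z ^ (j + 1)
      = ∑ j ∈ Finset.range (k + 1),
        ((-1 : ℝ) ^ (j + 1) * (Nat.choose (k + (j + 1)) (2 * (j + 1))) * z ^ (j + 1)
          - z * ((-1 : ℝ) ^ j * (Nat.choose (k + 1 + j) (2 * j + 1)) * z ^ j)) := by
    refine Finset.sum_congr rfl fun j _ => ?_
    have h1 : k + 1 + (j + 1) = (k + 1 + j) + 1 := by omega
    have h2' : 2 * (j + 1) = (2 * j + 1) + 1 := by omega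
    have h3 : k + (j + 1) = k + 1 + j := by omega
    rw [h1, h2', Nat.choose_succ_succ, h3]
    push_cast
    ring
  rw [key, Finset.sum_sub_distrib, ← Finset.mul_sum]
  norm_num
  ring

lemma pCoef_eq (k : ℕ) (hk : 1 ≤ k) (z : ℝ) :
    pCoef k z = Pfun k z + (z / 2) * qCoef k z := by
  obtain ⟨m, rfl⟩ : ∃ m, k = m + 1 := ⟨k - 1, by omega⟩
  unfold pCoef Pfun qCoef
  rw [Finset.sum_range_succ' (fun j => (-1 : ℝ) ^ j *
      (((m + 1 : ℕ) : ℝ) / (((m + 1 : ℕ) : ℝ) + j)) * (Nat.choose (m + 1 + j) (2 * j)) * z ^ j)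
      (m + 1),
    Finset.sum_range_succ' (fun j => (-1 : ℝ) ^ j * (Nat.choose (m + 1 + j) (2 * j)) * z ^ j)
      (m + 1)]
  have key : ∑ j ∈ Finset.range (m + 1),
      (-1 : ℝ) ^ (j + 1) * (((m + 1 : ℕ) : ℝ) / (((m + 1 : ℕ) : ℝ) + (j + 1 : ℕ))) *
        (Nat.choose (m + 1 + (j + 1)) (2 * (j + 1))) * z ^ (j + 1)
      = ∑ j ∈ Finset.range (m + 1),
        ((-1 : ℝ) ^ (j + 1) * (Nat.choose (m + 1 + (j + 1)) (2 * (j + 1))) * z ^ (j + 1)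
          + (z / 2) * ((-1 : ℝ) ^ j * (Nat.choose (m + 1 + j) (2 * j + 1)) * z ^ j)) := by
    refine Finset.sum_congr rfl fun j _ => ?_
    -- (m+1+j+1) * C(m+1+j, 2j+1) = C(m+1+j+1, 2j+2) * (2j+2)
    have hnat : (m + 1 + j + 1) * Nat.choose (m + 1 + j) (2 * j + 1)
        = Nat.choose (m + 1 + j + 1) (2 * j + 2) * (2 * j + 2) := by
      have := Nat.add_one_mul_choose_eq (m + 1 + j) (2 * j + 1)
      simpa [Nat.succ_eq_add_one] using this
    have hnatR : ((m + 1 + j + 1 : ℕ) : ℝ) * (Nat.choose (m + 1 + j) (2 * j + 1) : ℝ)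
        = (Nat.choose (m + 1 + j + 1) (2 * j + 2) : ℝ) * ((2 * j + 2 : ℕ) : ℝ) := by
      exact_mod_cast congrArg (fun n : ℕ => (n : ℝ)) hnat
    have h1 : m + 1 + (j + 1) = m + 1 + j + 1 := by omega
    have h2 : 2 * (j + 1) = 2 * j + 2 := by omega
    rw [h1, h2]
    have hne : ((m + 1 + j + 1 : ℕ) : ℝ) ≠ 0 := by positivity
    have hcast : ((m + 1 : ℕ) : ℝ) + ((j + 1 : ℕ) : ℝ) = ((m + 1 + j + 1 : ℕ) : ℝ) := by
      push_cast; ring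
    push_cast at hnatR ⊢
    have hD : ((m : ℝ) + 1 + (j + 1)) ≠ 0 := by positivity
    have hfrac : ((m : ℝ) + 1) / ((m : ℝ) + 1 + ((j : ℝ) + 1)) *
        ((Nat.choose (m + 1 + j + 1) (2 * j + 2) : ℕ) : ℝ)
        = ((Nat.choose (m + 1 + j + 1) (2 * j + 2) : ℕ) : ℝ)
          - (1 / 2) * ((Nat.choose (m + 1 + j) (2 * j + 1) : ℕ) : ℝ) := by
      field_simp
      linear_combination hnatR
    linear_combination ((-1 : ℝ) ^ (j + 1) * z ^ (j + 1)) * hfrac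
  rw [key, Finset.sum_add_distrib, ← Finset.mul_sum]
  have hm : ((m + 1 : ℕ) : ℝ) / (((m + 1 : ℕ) : ℝ) + ((0 : ℕ) : ℝ)) = 1 := by
    have : ((m + 1 : ℕ) : ℝ) ≠ 0 := by positivity
    field_simp
    simp
  push_cast at hm ⊢
  rw [hm]
  ring

lemma PU (k : ℕ) (z : ℝ) :
    qCoef k z = (Polynomial.Chebyshev.U ℝ ((k : ℤ) - 1)).eval (1 - z / 2) ∧
    Pfun k z = (Polynomial.Chebyshev.U ℝ (k : ℤ)).eval (1 - z / 2)
      - (Polynomial.Chebyshev.U ℝ ((k : ℤ) - 1)).eval (1 - z / 2) := by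
  induction k with
  | zero => simp [qCoef, Pfun]
  | succ k ih =>
    obtain ⟨hq, hP⟩ := ih
    have hcast : ((k + 1 : ℕ) : ℤ) - 1 = (k : ℤ) := by push_cast; ring
    have hq' : qCoef (k + 1) z = (Polynomial.Chebyshev.U ℝ (k : ℤ)).eval (1 - z / 2) := by
      rw [qCoef_succ, hq, hP]; ring
    have hrec : (Polynomial.Chebyshev.U ℝ ((k : ℤ) + 1)).eval (1 - z / 2)
        = (2 - z) * (Polynomial.Chebyshev.U ℝ (k : ℤ)).eval (1 - z / 2)
          - (Polynomial.Chebyshev.U ℝ ((k : ℤ) - 1)).eval (1 - z / 2) := by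
      have h := Polynomial.Chebyshev.U_add_two ℝ ((k : ℤ) - 1)
      have h1 : (k : ℤ) - 1 + 2 = (k : ℤ) + 1 := by ring
      have h2 : (k : ℤ) - 1 + 1 = (k : ℤ) := by ring
      rw [h1, h2] at h
      rw [h]
      simp only [Polynomial.eval_sub, Polynomial.eval_mul, Polynomial.eval_ofNat,
        Polynomial.eval_X]
      ring
    refine ⟨by rw [hcast, hq'], ?_⟩
    rw [Pfun_succ, hP, hcast]
    push_cast
    rw [hrec, hq']
    ring

lemma qCoef_cheb (k : ℕ) (z : ℝ) :
    qCoef k z = (Polynomial.Chebyshev.U ℝ ((k : ℤ) - 1)).eval (1 - z / 2) := (PU k z).1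

lemma pCoef_cheb (k : ℕ) (hk : 1 ≤ k) (z : ℝ) :
    pCoef k z = (Polynomial.Chebyshev.T ℝ (k : ℤ)).eval (1 - z / 2) := by
  have hT := Polynomial.Chebyshev.T_eq_U_sub_X_mul_U ℝ (k : ℤ)
  have hT' := congrArg (Polynomial.eval (1 - z / 2)) hT
  simp only [Polynomial.eval_sub, Polynomial.eval_mul, Polynomial.eval_X] at hT'
  rw [pCoef_eq k hk, (PU k z).1, (PU k z).2, hT']
  ring

/-- evaluation of `U` at `1 - z/2`. -/
def uEv (z : ℝ) (n : ℤ) : ℝ := (Polynomial.Chebyshev.U ℝ n).eval (1 - z / 2)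

lemma uEv_rec (z : ℝ) (k : ℕ) :
    uEv z ((k : ℤ) + 1) = (2 - z) * uEv z (k : ℤ) - uEv z ((k : ℤ) - 1) := by
  unfold uEv
  have h := Polynomial.Chebyshev.U_add_two ℝ ((k : ℤ) - 1)
  have h1 : (k : ℤ) - 1 + 2 = (k : ℤ) + 1 := by ring
  have h2 : (k : ℤ) - 1 + 1 = (k : ℤ) := by ring
  rw [h1, h2] at h
  rw [h]
  simp only [Polynomial.eval_sub, Polynomial.eval_mul, Polynomial.eval_ofNat,
    Polynomial.eval_X]
  ring

lemma leapfrog_iter (lam η x₀ v₀ : ℝ) (k : ℕ) :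
    (leapfrogStep1 (fun x => lam * x) η)^[k] (x₀, v₀) =
      ((uEv (η ^ 2 * lam) (k : ℤ) - (1 - η ^ 2 * lam / 2) * uEv (η ^ 2 * lam) ((k : ℤ) - 1)) * x₀
         + η * uEv (η ^ 2 * lam) ((k : ℤ) - 1) * v₀,
       -(lam * η) * (1 - η ^ 2 * lam / 4) * uEv (η ^ 2 * lam) ((k : ℤ) - 1) * x₀
         + (uEv (η ^ 2 * lam) (k : ℤ)
            - (1 - η ^ 2 * lam / 2) * uEv (η ^ 2 * lam) ((k : ℤ) - 1)) * v₀) := by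
  induction k with
  | zero => simp [uEv]
  | succ k ih =>
    rw [Function.iterate_succ_apply', ih]
    have hc : ((k + 1 : ℕ) : ℤ) = (k : ℤ) + 1 := by push_cast; ring
    have hc2 : ((k : ℤ) + 1) - 1 = (k : ℤ) := by ring
    rw [hc, hc2, uEv_rec]
    simp only [leapfrogStep1]
    rw [Prod.mk.injEq]
    constructor <;> ring

theorem leapfrog_chebyshev :
    -- `p_k(z) = T_k(1 − z/2)` and `q_k(z) = U_{k−1}(1 − z/2)`
    (∀ k : ℕ, 1 ≤ k → ∀ z : ℝ,
      pCoef k z = (Polynomial.Chebyshev.T ℝ (k : ℤ)).eval (1 - z / 2) ∧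
      qCoef k z = (Polynomial.Chebyshev.U ℝ ((k : ℤ) - 1)).eval (1 - z / 2)) ∧
    -- consequently, for `f(x) = (λ/2)x²`, the leapfrog iterates satisfy
    -- `x_k = p_k(η²λ)x₀ + η q_k(η²λ)v₀`
    (∀ lam η : ℝ, 0 < lam → ∀ x₀ v₀ : ℝ, ∀ K : ℕ, ∀ k : ℕ, 1 ≤ k → k ≤ K →
      ((leapfrogStep1 (fun x => lam * x) η)^[k] (x₀, v₀)).1 =
        pCoef k (η ^ 2 * lam) * x₀ + η * qCoef k (η ^ 2 * lam) * v₀) := by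
  constructor
  · exact fun k hk z => ⟨pCoef_cheb k hk z, qCoef_cheb k z⟩
  · intro lam η _ x₀ v₀ K k hk _
    rw [leapfrog_iter, qCoef_cheb, pCoef_cheb k hk]
    have hT := Polynomial.Chebyshev.T_eq_U_sub_X_mul_U ℝ (k : ℤ)
    have hT' := congrArg (Polynomial.eval (1 - (η ^ 2 * lam) / 2)) hT
    simp only [Polynomial.eval_sub, Polynomial.eval_mul, Polynomial.eval_X] at hT'
    simp only [uEv]
    rw [hT']
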